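/- arXiv:2310.13379 — 4 statements merged into one kernel-verified Lean document; each statement's English description precedes it below -/
import Mathlib

section
/- (Constrained quasi L²-projection, reproduction part.) Assume in addition that B_1(a) = 1 and B_i(a) = 0 for all i ≥ 2, and that the approximate duality property holds on a linear subspace P ⊆ V. Let f = Σ_{i=1}^N d_i B_i ∈ P satisfy f(a) = 0 (pointwise value of the continuous representative). Then the unique minimizer c of J(c) = ½ cᵀ Ĝ c − cᵀ f̂, where f̂_i = ⟨f, B_i⟩, subject to the constraint c_1 = 0, satisfies Σ_{i=1}^N c_i B_i = f; that is, the constrained quasi-interpolant reproduces every element of P that vanishes at the left endpoint a. -/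
/-!
Writing `f = ∑ dᵢ Bᵢ`, one has `f̂ = G d`, and testing the approximate duality on `f` gives
`S f̂ = G⁻¹ f̂ = d`, i.e. `Ĝ d = f̂`. Then `J e - J d = ½ (e - d)ᵀ Ĝ (e - d)`, so `d` is the
unique minimiser of `J` on all of `ℝᴺ`. Since `B₁(a) = 1` and the other `Bᵢ` vanish at `a`,
`f a = 0` forces `d₁ = 0`, so `d` is admissible and the constrained minimiser is `d` itself.
-/

open MeasureTheory Matrix

namespace Matrix

variable {ι : Type*} [Fintype ι]

noncomputable def quadraticEnergy (A : Matrix ι ι ℝ) (r c : ι → ℝ) : ℝ :=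
  1 / 2 * (c ⬝ᵥ A *ᵥ c) - c ⬝ᵥ r

lemma quadraticEnergy_sub_of_mulVec_eq {A : Matrix ι ι ℝ} (hA : A.IsSymm) {r d : ι → ℝ}
    (hd : A *ᵥ d = r) (c : ι → ℝ) :
    quadraticEnergy A r c - quadraticEnergy A r d = 1 / 2 * ((c - d) ⬝ᵥ A *ᵥ (c - d)) := by
  have hswap : d ⬝ᵥ A *ᵥ c = c ⬝ᵥ A *ᵥ d := by rw [← dotProduct_transpose_mulVec, hA.eq]
  simp only [quadraticEnergy, mulVec_sub, sub_dotProduct, dotProduct_sub, hswap, hd,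
    dotProduct_comm d r]
  ring

lemma PosDef.eq_of_quadraticEnergy_le {A : Matrix ι ι ℝ} (hA : A.PosDef) {r d c : ι → ℝ}
    (hd : A *ᵥ d = r) (hc : quadraticEnergy A r c ≤ quadraticEnergy A r d) : c = d := by
  by_contra hne
  have hpos := hA.dotProduct_mulVec_pos (sub_ne_zero.mpr hne)
  have hdiff := quadraticEnergy_sub_of_mulVec_eq (isHermitian_iff_isSymm.mp hA.isHermitian) hd c
  rw [star_trivial] at hpos
  linarith

lemma nonsing_inv_mulVec_mulVec {R : Type*} [CommRing R] [DecidableEq ι] {A : Matrix ι ι R}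
    (hA : IsUnit A) (v : ι → R) : A⁻¹ *ᵥ (A *ᵥ v) = v := by
  rw [mulVec_mulVec, nonsing_inv_mul _ ((isUnit_iff_isUnit_det A).mp hA), one_mulVec]

end Matrix

section Gram

variable {α ι : Type*} [MeasurableSpace α] {μ : Measure α} {B : ι → α → ℝ}

noncomputable def gramMatrix (μ : Measure α) (B : ι → α → ℝ) : Matrix ι ι ℝ :=
  Matrix.of fun i j => ∫ x, B i x * B j x ∂μ

lemma gramMatrix_isHermitian [Fintype ι] : (gramMatrix μ B).IsHermitian := by
  ext i j
  simp only [gramMatrix, conjTranspose_apply, of_apply, star_trivial, mul_comm]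

variable [Fintype ι]

lemma integrable_sum_mul (hB : ∀ i j, Integrable (fun x => B i x * B j x) μ) (v : ι → ℝ)
    (j : ι) : Integrable (fun x => (∑ i, v i * B i x) * B j x) μ := by
  simp_rw [Finset.sum_mul, mul_assoc]
  exact integrable_finsetSum _ fun i _ => (hB i j).const_mul (v i)

lemma integral_mul_sum_mul {g : α → ℝ} (hg : ∀ j, Integrable (fun x => g x * B j x) μ)
    (w : ι → ℝ) : ∫ x, g x * ∑ j, w j * B j x ∂μ = w ⬝ᵥ fun j => ∫ x, g x * B j x ∂μ := by
  simp_rw [Finset.mul_sum, mul_left_comm (g _)]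
  rw [integral_finsetSum _ fun j _ => (hg j).const_mul (w j)]
  simp_rw [integral_const_mul, dotProduct]

lemma integral_sum_mul_mul (hB : ∀ i j, Integrable (fun x => B i x * B j x) μ) (v : ι → ℝ)
    (j : ι) : ∫ x, (∑ i, v i * B i x) * B j x ∂μ = (gramMatrix μ B *ᵥ v) j := by
  simp_rw [mul_comm _ (B j _), integral_mul_sum_mul (hB j), mulVec, dotProduct_comm]
  rfl

lemma integral_sum_mul_sum (hB : ∀ i j, Integrable (fun x => B i x * B j x) μ) (v w : ι → ℝ) :
    ∫ x, (∑ i, v i * B i x) * ∑ j, w j * B j x ∂μ = w ⬝ᵥ gramMatrix μ B *ᵥ v := by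
  rw [integral_mul_sum_mul (integrable_sum_mul hB v)]
  simp_rw [integral_sum_mul_mul hB]

lemma gramMatrix_posDef (hB : ∀ i j, Integrable (fun x => B i x * B j x) μ)
    (hli : ∀ c : ι → ℝ, (∀ᵐ x ∂μ, ∑ i, c i * B i x = 0) → c = 0) :
    (gramMatrix μ B).PosDef := by
  refine PosDef.of_dotProduct_mulVec_pos gramMatrix_isHermitian fun v hv => ?_
  rw [star_trivial, ← integral_sum_mul_sum hB]
  have hint : Integrable (fun x => (∑ i, v i * B i x) * ∑ j, v j * B j x) μ := by
    simp_rw [Finset.mul_sum, mul_left_comm (∑ i, v i * B i _)]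
    exact integrable_finsetSum _ fun j _ => (integrable_sum_mul hB v j).const_mul (v j)
  refine (integral_nonneg fun x => mul_self_nonneg _).lt_of_ne' fun hzero => hv (hli v ?_)
  filter_upwards [(integral_eq_zero_iff_of_nonneg (fun x => mul_self_nonneg _) hint).mp hzero]
    with x hx
  exact mul_self_eq_zero.mp hx

end Gram

theorem constrained_quasi_l2_projection_reproduction_general
    (a b : ℝ) (n : ℕ)
    (B : Fin (n + 2) → ℝ → ℝ)
    (hBcont : ∀ i, ContinuousOn (B i) (Set.Icc a b))
    (hBli : ∀ c : Fin (n + 2) → ℝ,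
      (∀ᵐ x ∂(volume.restrict (Set.Icc a b)), ∑ i, c i * B i x = 0) → c = 0)
    (G : Matrix (Fin (n + 2)) (Fin (n + 2)) ℝ)
    (hG : ∀ i j, G i j = ∫ x in Set.Icc a b, B i x * B j x)
    (D : Fin (n + 2) → ℝ → ℝ)
    (hD : ∀ i x, D i x = ∑ j, G⁻¹ i j * B j x)
    (S : Matrix (Fin (n + 2)) (Fin (n + 2)) ℝ) (hS : S.PosDef)
    (Ghat : Matrix (Fin (n + 2)) (Fin (n + 2)) ℝ) (hGhat : Ghat = S⁻¹)
    (Dhat : Fin (n + 2) → ℝ → ℝ)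
    (hDhat : ∀ i x, Dhat i x = ∑ j, S i j * B j x)
    (P : Submodule ℝ (ℝ → ℝ))
    (hdual : ∀ f ∈ P, ∀ i,
      (∫ x in Set.Icc a b, f x * Dhat i x) = ∫ x in Set.Icc a b, f x * D i x)
    (hB0a : B 0 a = 1)
    (hBia : ∀ i : Fin (n + 2), i ≠ 0 → B i a = 0)
    (d : Fin (n + 2) → ℝ) (f : ℝ → ℝ)
    (hf : ∀ x, f x = ∑ i, d i * B i x)
    (hfP : f ∈ P)
    (hfa : f a = 0)
    (fhat : Fin (n + 2) → ℝ)
    (hfhat : ∀ i, fhat i = ∫ x in Set.Icc a b, f x * B i x)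
    (J : (Fin (n + 2) → ℝ) → ℝ)
    (hJ : ∀ c : Fin (n + 2) → ℝ, J c = (1 / 2) * (c ⬝ᵥ Ghat.mulVec c) - c ⬝ᵥ fhat) :
    ∀ c : Fin (n + 2) → ℝ, c 0 = 0 → (∀ e : Fin (n + 2) → ℝ, e 0 = 0 → J c ≤ J e) →
      ∀ x, (∑ i, c i * B i x) = f x := by
  intro c _ hmin x
  have hd0 : d 0 = 0 := by
    rwa [hf, Fintype.sum_eq_single 0 fun i hi => by rw [hBia i hi, mul_zero], hB0a, mul_one]
      at hfa
  obtain rfl : f = fun x => ∑ i, d i * B i x := funext hf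
  obtain rfl : J = Ghat.quadraticEnergy fhat := funext hJ
  set μ := volume.restrict (Set.Icc a b)
  have hBB (i j) : Integrable (fun x => B i x * B j x) μ :=
    ((hBcont i).mul (hBcont j)).integrableOn_compact isCompact_Icc
  obtain rfl : G = gramMatrix μ B := Matrix.ext hG
  have hfhat_eq : fhat = fun j => ∫ x, (∑ i, d i * B i x) * B j x ∂μ := funext hfhat
  have hfhat_gram : fhat = gramMatrix μ B *ᵥ d :=
    hfhat_eq.trans (funext (integral_sum_mul_mul hBB d))
  have hS_eq_inv : S *ᵥ fhat = (gramMatrix μ B)⁻¹ *ᵥ fhat := by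
    ext i
    have hdual_i := hdual _ hfP i
    simp only [hDhat, hD, integral_mul_sum_mul (integrable_sum_mul hBB d)] at hdual_i
    rwa [hfhat_eq]
  have hSd : S *ᵥ fhat = d := by
    rw [hS_eq_inv, hfhat_gram, nonsing_inv_mulVec_mulVec (gramMatrix_posDef hBB hBli).isUnit]
  have hGhat_d : Ghat *ᵥ d = fhat := by
    rw [hGhat, ← hSd, nonsing_inv_mulVec_mulVec hS.isUnit]
  obtain rfl : c = d := (hGhat ▸ hS.inv).eq_of_quadraticEnergy_le hGhat_d (hmin d hd0)
  rfl

/-- Constrained quasi L²-projection, reproduction part: Assume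
`B 1 (a) = 1` and `B i (a) = 0` for `i ≥ 2`, and that the approximate duality property
holds on a linear subspace `P ⊆ V`. If `f = ∑ i d i • B i ∈ P` satisfies `f a = 0`,
then the unique minimizer `c` of `J(c) = ½ cᵀ Ĝ c − cᵀ f̂` (with `f̂ i = ⟨f, B i⟩`)
subject to `c 1 = 0` satisfies `∑ i c i • B i = f`: the constrained quasi-interpolant
reproduces every element of `P` vanishing at the left endpoint. -/
theorem constrained_quasi_l2_projection_reproduction
    (a b : ℝ) (hab : a < b) (n : ℕ)
    (B : Fin (n + 2) → ℝ → ℝ)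
    (hBcont : ∀ i, ContinuousOn (B i) (Set.Icc a b))
    (hBli : ∀ c : Fin (n + 2) → ℝ,
      (∀ᵐ x ∂(volume.restrict (Set.Icc a b)), ∑ i, c i * B i x = 0) → c = 0)
    (G : Matrix (Fin (n + 2)) (Fin (n + 2)) ℝ)
    (hG : ∀ i j, G i j = ∫ x in Set.Icc a b, B i x * B j x)
    (D : Fin (n + 2) → ℝ → ℝ)
    (hD : ∀ i x, D i x = ∑ j, G⁻¹ i j * B j x)
    (S : Matrix (Fin (n + 2)) (Fin (n + 2)) ℝ) (hS : S.PosDef)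
    (Ghat : Matrix (Fin (n + 2)) (Fin (n + 2)) ℝ) (hGhat : Ghat = S⁻¹)
    (Dhat : Fin (n + 2) → ℝ → ℝ)
    (hDhat : ∀ i x, Dhat i x = ∑ j, S i j * B j x)
    (P : Submodule ℝ (ℝ → ℝ))
    (hPV : P ≤ Submodule.span ℝ (Set.range B))
    (hdual : ∀ f ∈ P, ∀ i,
      (∫ x in Set.Icc a b, f x * Dhat i x) = ∫ x in Set.Icc a b, f x * D i x)
    (hB0a : B 0 a = 1)
    (hBia : ∀ i : Fin (n + 2), i ≠ 0 → B i a = 0)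
    (d : Fin (n + 2) → ℝ) (f : ℝ → ℝ)
    (hf : ∀ x, f x = ∑ i, d i * B i x)
    (hfP : f ∈ P)
    (hfa : f a = 0)
    (fhat : Fin (n + 2) → ℝ)
    (hfhat : ∀ i, fhat i = ∫ x in Set.Icc a b, f x * B i x)
    (J : (Fin (n + 2) → ℝ) → ℝ)
    (hJ : ∀ c : Fin (n + 2) → ℝ, J c = (1 / 2) * (c ⬝ᵥ Ghat.mulVec c) - c ⬝ᵥ fhat) :
    ∀ c : Fin (n + 2) → ℝ, c 0 = 0 → (∀ e : Fin (n + 2) → ℝ, e 0 = 0 → J c ≤ J e) →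
      ∀ x, (∑ i, c i * B i x) = f x :=
  constrained_quasi_l2_projection_reproduction_general a b n B hBcont hBli G hG D hD S hS Ghat hGhat
    Dhat hDhat P hdual hB0a hBia d f hf hfP hfa fhat hfhat J hJ
end

section
/- (Geometry independence of the Petrov–Galerkin mass matrix.) Let Φ : (0,1)² → Ω be a C¹ diffeomorphism onto an open set Ω ⊆ ℝ² whose Jacobian determinant det DΦ(x) is positive for all x ∈ (0,1)², and let ρ : Ω → ℝ be continuous and positive. Set c(x) = det DΦ(x) · ρ(Φ(x)) for x ∈ (0,1)². For indices i = (i₁,i₂) and j = (j₁,j₂), define the trial function N_j : Ω → ℝ by N_j(Φ(x₁,x₂)) = B¹_{j₁}(x₁) B²_{j₂}(x₂) and the test function W_i : Ω → ℝ by W_i(Φ(x₁,x₂)) = D̂¹_{i₁}(x₁) D̂²_{i₂}(x₂) / c(x₁,x₂). Then ∫_Ω ρ(y) W_i(y) N_j(y) dy = (∫₀¹ D̂¹_{i₁}(x) B¹_{j₁}(x) dx) · (∫₀¹ D̂²_{i₂}(x) B²_{j₂}(x) dx); in particular the consistent mass matrix does not depend on the geometric mapping Φ or the density ρ. -/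
open MeasureTheory

/-- Geometry independence of the Petrov–Galerkin mass matrix: Let
`Φ : (0,1)² → Ω` be a `C¹` diffeomorphism onto an open set `Ω ⊆ ℝ²` with positive
Jacobian determinant, let `ρ : Ω → ℝ` be continuous and positive, and set
`c x = det DΦ(x) * ρ (Φ x)`. With trial functions `N j (Φ x) = B¹ j₁ x₁ * B² j₂ x₂` and
test functions `W i (Φ x) = D̂¹ i₁ x₁ * D̂² i₂ x₂ / c x`, one has
`∫_Ω ρ W i N j = (∫₀¹ D̂¹ i₁ B¹ j₁) * (∫₀¹ D̂² i₂ B² j₂)`; in particular the consistent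
mass matrix does not depend on the geometric mapping `Φ` or the density `ρ`. -/
theorem geometry_independence_of_mass_matrix
    (N1 N2 : ℕ)
    (B1 : Fin N1 → ℝ → ℝ) (hB1cont : ∀ i, ContinuousOn (B1 i) (Set.Icc 0 1))
    (B2 : Fin N2 → ℝ → ℝ) (hB2cont : ∀ i, ContinuousOn (B2 i) (Set.Icc 0 1))
    (S1 : Matrix (Fin N1) (Fin N1) ℝ) (hS1 : S1.PosDef)
    (S2 : Matrix (Fin N2) (Fin N2) ℝ) (hS2 : S2.PosDef)
    (Dhat1 : Fin N1 → ℝ → ℝ) (hDhat1 : ∀ i x, Dhat1 i x = ∑ j, S1 i j * B1 j x)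
    (Dhat2 : Fin N2 → ℝ → ℝ) (hDhat2 : ∀ i x, Dhat2 i x = ∑ j, S2 i j * B2 j x)
    (sq : Set (ℝ × ℝ)) (hsq : sq = Set.Ioo (0 : ℝ) 1 ×ˢ Set.Ioo (0 : ℝ) 1)
    (Ω : Set (ℝ × ℝ)) (hΩopen : IsOpen Ω)
    (Φ : ℝ × ℝ → ℝ × ℝ) (Φ' : ℝ × ℝ → (ℝ × ℝ) →L[ℝ] ℝ × ℝ)
    (hΦderiv : ∀ x ∈ sq, HasFDerivAt Φ (Φ' x) x)
    (hΦ'cont : ContinuousOn Φ' sq)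
    (hΦinj : Set.InjOn Φ sq)
    (hΦimg : Φ '' sq = Ω)
    (hdet : ∀ x ∈ sq, 0 < (Φ' x).det)
    (ρ : ℝ × ℝ → ℝ) (hρcont : ContinuousOn ρ Ω) (hρpos : ∀ y ∈ Ω, 0 < ρ y)
    (c : ℝ × ℝ → ℝ) (hc : ∀ x, c x = (Φ' x).det * ρ (Φ x))
    (Nfun : Fin N1 × Fin N2 → ℝ × ℝ → ℝ)
    (hNfun : ∀ j : Fin N1 × Fin N2, ∀ x ∈ sq, Nfun j (Φ x) = B1 j.1 x.1 * B2 j.2 x.2)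
    (W : Fin N1 × Fin N2 → ℝ × ℝ → ℝ)
    (hW : ∀ i : Fin N1 × Fin N2, ∀ x ∈ sq,
      W i (Φ x) = Dhat1 i.1 x.1 * Dhat2 i.2 x.2 / c x) :
    ∀ i j : Fin N1 × Fin N2,
      (∫ y in Ω, ρ y * W i y * Nfun j y) =
        (∫ x in Set.Icc (0 : ℝ) 1, Dhat1 i.1 x * B1 j.1 x) *
          ∫ x in Set.Icc (0 : ℝ) 1, Dhat2 i.2 x * B2 j.2 x := by
  intro i j
  have hsqm : MeasurableSet sq := by
    rw [hsq]; exact measurableSet_Ioo.prod measurableSet_Ioo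
  have key := integral_image_eq_integral_abs_det_fderiv_smul volume hsqm
    (fun x hx => (hΦderiv x hx).hasFDerivWithinAt) hΦinj
    (fun y => ρ y * W i y * Nfun j y)
  rw [hΦimg] at key
  rw [key]
  have heq : ∀ x ∈ sq,
      |(Φ' x).det| • (ρ (Φ x) * W i (Φ x) * Nfun j (Φ x)) =
      (Dhat1 i.1 x.1 * B1 j.1 x.1) * (Dhat2 i.2 x.2 * B2 j.2 x.2) := by
    intro x hx
    have hΦmem : Φ x ∈ Ω := hΦimg ▸ Set.mem_image_of_mem Φ hx
    have hdx := hdet x hx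
    have hrx := hρpos _ hΦmem
    rw [hW i x hx, hNfun j x hx, hc, smul_eq_mul, abs_of_pos hdx]
    field_simp
  rw [setIntegral_congr_fun hsqm heq, hsq, Measure.volume_eq_prod,
    setIntegral_prod_mul (fun x => Dhat1 i.1 x * B1 j.1 x) (fun x => Dhat2 i.2 x * B2 j.2 x),
    ← integral_Icc_eq_integral_Ioo, ← integral_Icc_eq_integral_Ioo]
end

section
/- (Kronecker factorization of the two-dimensional mass matrix.) In the setting of the geometry-independence result, the two-dimensional consistent mass matrix M with entries M_{(i₁,i₂),(j₁,j₂)} = ∫_Ω ρ W_{(i₁,i₂)} N_{(j₁,j₂)} dy equals the Kronecker product (S²G²) ⊗ (S¹G¹); that is, M_{(i₁,i₂),(j₁,j₂)} = (S¹G¹)_{i₁ j₁} · (S²G²)_{i₂ j₂}, where G^k is the Gram matrix G^k_{ij} = ∫₀¹ B^k_i B^k_j dx. -/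
open MeasureTheory


lemma univ_int {N : ℕ} (B : Fin N → ℝ → ℝ) (hB : ∀ i, ContinuousOn (B i) (Set.Icc 0 1))
    (S : Matrix (Fin N) (Fin N) ℝ) (Dhat : Fin N → ℝ → ℝ)
    (hDhat : ∀ i x, Dhat i x = ∑ j, S i j * B j x)
    (G : Matrix (Fin N) (Fin N) ℝ)
    (hG : ∀ i j, G i j = ∫ x in Set.Icc (0 : ℝ) 1, B i x * B j x)
    (i j : Fin N) :
    ∫ x in Set.Ioo (0 : ℝ) 1, Dhat i x * B j x = (S * G) i j := by
  have hint : ∀ k, IntegrableOn (fun x => S i k * (B k x * B j x)) (Set.Ioo (0:ℝ) 1) := by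
    intro k
    exact ((((hB k).mul (hB j)).integrableOn_Icc).mono_set Set.Ioo_subset_Icc_self).const_mul _
  calc ∫ x in Set.Ioo (0 : ℝ) 1, Dhat i x * B j x
      = ∫ x in Set.Ioo (0 : ℝ) 1, ∑ k, S i k * (B k x * B j x) := by
        refine setIntegral_congr_fun measurableSet_Ioo (fun x _ => ?_)
        simp [hDhat, Finset.sum_mul, mul_assoc]
    _ = ∑ k, ∫ x in Set.Ioo (0 : ℝ) 1, S i k * (B k x * B j x) :=
        integral_finset_sum _ (fun k _ => hint k)
    _ = ∑ k, S i k * G k j := by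
        refine Finset.sum_congr rfl (fun k _ => ?_)
        rw [MeasureTheory.integral_const_mul, hG, integral_Icc_eq_integral_Ioo]
    _ = (S * G) i j := (Matrix.mul_apply).symm

/-- Kronecker factorization of the two-dimensional mass matrix: In the
setting of the geometry-independence result, the two-dimensional consistent mass matrix
`M (i₁,i₂) (j₁,j₂) = ∫_Ω ρ W_(i₁,i₂) N_(j₁,j₂)` equals the Kronecker product
`(S²G²) ⊗ (S¹G¹)`, i.e. `M (i₁,i₂) (j₁,j₂) = (S¹G¹) i₁ j₁ * (S²G²) i₂ j₂`, where
`Gᵏ` are the univariate Gram matrices. -/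
theorem kronecker_factorization_of_mass_matrix
    (N1 N2 : ℕ)
    (B1 : Fin N1 → ℝ → ℝ) (hB1cont : ∀ i, ContinuousOn (B1 i) (Set.Icc 0 1))
    (B2 : Fin N2 → ℝ → ℝ) (hB2cont : ∀ i, ContinuousOn (B2 i) (Set.Icc 0 1))
    (S1 : Matrix (Fin N1) (Fin N1) ℝ) (hS1 : S1.PosDef)
    (S2 : Matrix (Fin N2) (Fin N2) ℝ) (hS2 : S2.PosDef)
    (Dhat1 : Fin N1 → ℝ → ℝ) (hDhat1 : ∀ i x, Dhat1 i x = ∑ j, S1 i j * B1 j x)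
    (Dhat2 : Fin N2 → ℝ → ℝ) (hDhat2 : ∀ i x, Dhat2 i x = ∑ j, S2 i j * B2 j x)
    (G1 : Matrix (Fin N1) (Fin N1) ℝ)
    (hG1 : ∀ i j, G1 i j = ∫ x in Set.Icc (0 : ℝ) 1, B1 i x * B1 j x)
    (G2 : Matrix (Fin N2) (Fin N2) ℝ)
    (hG2 : ∀ i j, G2 i j = ∫ x in Set.Icc (0 : ℝ) 1, B2 i x * B2 j x)
    (sq : Set (ℝ × ℝ)) (hsq : sq = Set.Ioo (0 : ℝ) 1 ×ˢ Set.Ioo (0 : ℝ) 1)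
    (Ω : Set (ℝ × ℝ)) (hΩopen : IsOpen Ω)
    (Φ : ℝ × ℝ → ℝ × ℝ) (Φ' : ℝ × ℝ → (ℝ × ℝ) →L[ℝ] ℝ × ℝ)
    (hΦderiv : ∀ x ∈ sq, HasFDerivAt Φ (Φ' x) x)
    (hΦ'cont : ContinuousOn Φ' sq)
    (hΦinj : Set.InjOn Φ sq)
    (hΦimg : Φ '' sq = Ω)
    (hdet : ∀ x ∈ sq, 0 < (Φ' x).det)
    (ρ : ℝ × ℝ → ℝ) (hρcont : ContinuousOn ρ Ω) (hρpos : ∀ y ∈ Ω, 0 < ρ y)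
    (c : ℝ × ℝ → ℝ) (hc : ∀ x, c x = (Φ' x).det * ρ (Φ x))
    (Nfun : Fin N1 × Fin N2 → ℝ × ℝ → ℝ)
    (hNfun : ∀ j : Fin N1 × Fin N2, ∀ x ∈ sq, Nfun j (Φ x) = B1 j.1 x.1 * B2 j.2 x.2)
    (W : Fin N1 × Fin N2 → ℝ × ℝ → ℝ)
    (hW : ∀ i : Fin N1 × Fin N2, ∀ x ∈ sq,
      W i (Φ x) = Dhat1 i.1 x.1 * Dhat2 i.2 x.2 / c x)
    (M : Matrix (Fin N1 × Fin N2) (Fin N1 × Fin N2) ℝ)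
    (hM : ∀ i j, M i j = ∫ y in Ω, ρ y * W i y * Nfun j y) :
    ∀ i j : Fin N1 × Fin N2,
      M i j = (S1 * G1) i.1 j.1 * (S2 * G2) i.2 j.2 := by
  intro i j
  have hsqm : MeasurableSet sq := by
    rw [hsq]; exact measurableSet_Ioo.prod measurableSet_Ioo
  have hcov := integral_image_eq_integral_abs_det_fderiv_smul (volume)
    hsqm (fun x hx => (hΦderiv x hx).hasFDerivWithinAt) hΦinj
    (fun y => ρ y * W i y * Nfun j y)
  rw [hM, ← hΦimg, hcov]
  have heq : Set.EqOn
      (fun x => |(Φ' x).det| • (ρ (Φ x) * W i (Φ x) * Nfun j (Φ x)))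
      (fun x : ℝ × ℝ => (Dhat1 i.1 x.1 * B1 j.1 x.1) * (Dhat2 i.2 x.2 * B2 j.2 x.2)) sq := by
    intro x hx
    have hd := hdet x hx
    have hρ : 0 < ρ (Φ x) := hρpos _ (hΦimg ▸ Set.mem_image_of_mem Φ hx)
    simp only [hW i x hx, hNfun j x hx, hc, abs_of_pos hd, smul_eq_mul]
    field_simp
  rw [setIntegral_congr_fun hsqm heq, hsq, Measure.volume_eq_prod,
    setIntegral_prod_mul (fun x => Dhat1 i.1 x * B1 j.1 x) (fun x => Dhat2 i.2 x * B2 j.2 x),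
    univ_int B1 hB1cont S1 Dhat1 hDhat1 G1 hG1,
    univ_int B2 hB2cont S2 Dhat2 hDhat2 G2 hG2]
end

section
/- (Two-dimensional polynomial reproduction via Kronecker structure.) For k = 1, 2, suppose the approximate duality property holds on a subspace P^k ⊆ span{B^k_1,…,B^k_{N_k}}, i.e., ∫ f D̂^k_i = ∫ f D^k_i for all f ∈ P^k and all i, where D^k_i = Σ_j ((G^k)⁻¹)_{ij} B^k_j are the exact dual functions. Then for every f₁ ∈ P¹ and f₂ ∈ P², the function f(x,y) = f₁(x) f₂(y) is reproduced by the tensor-product quasi-interpolant: Σ_{i₁=1}^{N₁} Σ_{i₂=1}^{N₂} (∫₀¹∫₀¹ f₁(x) f₂(y) D̂¹_{i₁}(x) D̂²_{i₂}(y) dx dy) B¹_{i₁}(x) B²_{i₂}(y) = f(x,y) as elements of L²([0,1]²). -/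
open MeasureTheory

/-- One-dimensional key lemma: if `f = ∑ c j • B j` then `∫ f * D i = c i`
where `D i = ∑ j, G⁻¹ i j * B j` and `G` is the Gram matrix. -/
lemma one_dim_dual_coeff
    (N : ℕ) (B : Fin N → ℝ → ℝ) (hBcont : ∀ i, ContinuousOn (B i) (Set.Icc 0 1))
    (hBli : ∀ c : Fin N → ℝ,
      (∀ᵐ x ∂(volume.restrict (Set.Icc (0 : ℝ) 1)), ∑ i, c i * B i x = 0) → c = 0)
    (G : Matrix (Fin N) (Fin N) ℝ)
    (hG : ∀ i j, G i j = ∫ x in Set.Icc (0 : ℝ) 1, B i x * B j x)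
    (c : Fin N → ℝ) (i : Fin N) :
    (∫ x in Set.Icc (0 : ℝ) 1, (∑ j, c j * B j x) * (∑ k, G⁻¹ i k * B k x)) = c i := by
  have hint : ∀ j k : Fin N, IntegrableOn (fun x => B j x * B k x) (Set.Icc (0:ℝ) 1) volume :=
    fun j k => ((hBcont j).mul (hBcont k)).integrableOn_Icc
  -- G is symmetric
  have hGsymm : ∀ j k, G j k = G k j := by
    intro j k
    rw [hG, hG]
    congr 1; ext x; ring
  -- G is invertible
  have hGunit : IsUnit G.det := by
    rw [← Matrix.isUnit_iff_isUnit_det, ← Matrix.mulVec_injective_iff_isUnit]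
    intro a b hab
    have key : ∀ d : Fin N → ℝ, G.mulVec d = 0 → d = 0 := by
      intro d hd
      apply hBli
      set g : ℝ → ℝ := fun x => ∑ j, d j * B j x with hg
      have hgcont : ContinuousOn g (Set.Icc (0:ℝ) 1) := by
        apply continuousOn_finset_sum
        intro j _
        exact (hBcont j).const_smul (d j)
      have hgint : IntegrableOn g (Set.Icc (0:ℝ) 1) volume := hgcont.integrableOn_Icc
      have hg2int : IntegrableOn (fun x => g x * g x) (Set.Icc (0:ℝ) 1) volume :=
        (hgcont.mul hgcont).integrableOn_Icc
      have hzero : (∫ x in Set.Icc (0:ℝ) 1, g x * g x) = 0 := by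
        have : ∀ x, g x * g x = ∑ j, d j * (B j x * g x) := by
          intro x
          rw [hg]
          rw [Finset.sum_mul]
          congr 1; ext j; ring
        rw [show (fun x => g x * g x) = fun x => ∑ j, d j * (B j x * g x) from funext this]
        have hBg : ∀ j, IntegrableOn (fun x => B j x * g x) (Set.Icc (0:ℝ) 1) volume :=
          fun j => ((hBcont j).mul hgcont).integrableOn_Icc
        rw [integral_finset_sum _ (fun j _ => (hBg j).const_mul (d j))]
        have : ∀ j : Fin N, (∫ x in Set.Icc (0:ℝ) 1, d j * (B j x * g x))
            = d j * ∑ k, G j k * d k := by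
          intro j
          rw [integral_const_mul]
          congr 1
          have : (fun x => B j x * g x) = fun x => ∑ k, d k * (B j x * B k x) := by
            ext x; rw [hg, Finset.mul_sum]; congr 1; ext k; ring
          rw [this, integral_finset_sum _ (fun k _ => (hint j k).const_mul (d k))]
          rw [Finset.sum_congr rfl (fun k _ => by rw [integral_const_mul, ← hG])]
          congr 1; ext k; ring
        rw [Finset.sum_congr rfl (fun j _ => this j)]
        have hmv : ∀ j, ∑ k, G j k * d k = 0 := by
          intro j
          have := congrFun hd j
          simpa [Matrix.mulVec, dotProduct] using this
        simp [hmv]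
      have hnn : (0:ℝ → ℝ) ≤ fun x => g x * g x := fun x => mul_self_nonneg (g x)
      have := (integral_eq_zero_iff_of_nonneg hnn hg2int).mp hzero
      filter_upwards [this] with x hx
      have : g x * g x = 0 := hx
      have : g x = 0 := by nlinarith [mul_self_nonneg (g x)]
      simpa [hg] using this
    have h1 : G.mulVec (a - b) = 0 := by
      rw [Matrix.mulVec_sub, hab, sub_self]
    exact sub_eq_zero.mp (key _ h1)
  -- now compute the integral
  have expand : (fun x => (∑ j, c j * B j x) * (∑ k, G⁻¹ i k * B k x))
      = fun x => ∑ j, ∑ k, (c j * G⁻¹ i k) * (B j x * B k x) := by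
    ext x
    rw [Finset.sum_mul]
    congr 1; ext j
    rw [Finset.mul_sum]
    congr 1; ext k
    ring
  rw [expand]
  rw [integral_finset_sum _ (fun j _ => integrable_finset_sum _
    (fun k _ => ((hint j k).const_mul _)))]
  have step : ∀ j : Fin N, (∫ x in Set.Icc (0:ℝ) 1,
      ∑ k, (c j * G⁻¹ i k) * (B j x * B k x)) = ∑ k, (c j * G⁻¹ i k) * G j k := by
    intro j
    rw [integral_finset_sum _ (fun k _ => (hint j k).const_mul _)]
    exact Finset.sum_congr rfl fun k _ => by rw [integral_const_mul, ← hG]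
  rw [Finset.sum_congr rfl fun j _ => step j]
  have : ∑ j, ∑ k, (c j * G⁻¹ i k) * G j k = ∑ k, G⁻¹ i k * ∑ j, G k j * c j := by
    rw [Finset.sum_comm]
    congr 1; ext k
    rw [Finset.mul_sum]
    congr 1; ext j
    rw [hGsymm j k]; ring
  rw [this]
  have hfin : ∑ k, G⁻¹ i k * ∑ j, G k j * c j = ((G⁻¹ * G).mulVec c) i := by
    simp [Matrix.mulVec, dotProduct, Matrix.mul_apply, Finset.mul_sum, Finset.sum_mul]
    rw [Finset.sum_comm]
    congr 1; ext k
    congr 1; ext j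
    ring
  rw [hfin, Matrix.nonsing_inv_mul G hGunit]
  simp [Matrix.mulVec, dotProduct, Matrix.one_apply]

/-- Two-dimensional polynomial reproduction via Kronecker structure: For
`k = 1, 2`, suppose the approximate duality property holds on a subspace
`Pᵏ ⊆ span {Bᵏ i}`. Then for every `f₁ ∈ P¹` and `f₂ ∈ P²`, the function
`f (x,y) = f₁ x * f₂ y` is reproduced by the tensor-product quasi-interpolant:
`∑ i₁ ∑ i₂ (∫₀¹∫₀¹ f₁ x * f₂ y * D̂¹ i₁ x * D̂² i₂ y dx dy) * B¹ i₁ x * B² i₂ y = f (x,y)`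
as elements of `L²([0,1]²)`. -/
theorem two_dimensional_polynomial_reproduction
    (N1 N2 : ℕ)
    (B1 : Fin N1 → ℝ → ℝ) (hB1cont : ∀ i, ContinuousOn (B1 i) (Set.Icc 0 1))
    (hB1li : ∀ c : Fin N1 → ℝ,
      (∀ᵐ x ∂(volume.restrict (Set.Icc (0 : ℝ) 1)), ∑ i, c i * B1 i x = 0) → c = 0)
    (B2 : Fin N2 → ℝ → ℝ) (hB2cont : ∀ i, ContinuousOn (B2 i) (Set.Icc 0 1))
    (hB2li : ∀ c : Fin N2 → ℝ,
      (∀ᵐ x ∂(volume.restrict (Set.Icc (0 : ℝ) 1)), ∑ i, c i * B2 i x = 0) → c = 0)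
    (G1 : Matrix (Fin N1) (Fin N1) ℝ)
    (hG1 : ∀ i j, G1 i j = ∫ x in Set.Icc (0 : ℝ) 1, B1 i x * B1 j x)
    (G2 : Matrix (Fin N2) (Fin N2) ℝ)
    (hG2 : ∀ i j, G2 i j = ∫ x in Set.Icc (0 : ℝ) 1, B2 i x * B2 j x)
    (D1 : Fin N1 → ℝ → ℝ) (hD1 : ∀ i x, D1 i x = ∑ j, G1⁻¹ i j * B1 j x)
    (D2 : Fin N2 → ℝ → ℝ) (hD2 : ∀ i x, D2 i x = ∑ j, G2⁻¹ i j * B2 j x)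
    (S1 : Matrix (Fin N1) (Fin N1) ℝ) (hS1 : S1.PosDef)
    (S2 : Matrix (Fin N2) (Fin N2) ℝ) (hS2 : S2.PosDef)
    (Dhat1 : Fin N1 → ℝ → ℝ) (hDhat1 : ∀ i x, Dhat1 i x = ∑ j, S1 i j * B1 j x)
    (Dhat2 : Fin N2 → ℝ → ℝ) (hDhat2 : ∀ i x, Dhat2 i x = ∑ j, S2 i j * B2 j x)
    (P1 : Submodule ℝ (ℝ → ℝ)) (hP1V : P1 ≤ Submodule.span ℝ (Set.range B1))
    (hdual1 : ∀ f ∈ P1, ∀ i,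
      (∫ x in Set.Icc (0 : ℝ) 1, f x * Dhat1 i x) = ∫ x in Set.Icc (0 : ℝ) 1, f x * D1 i x)
    (P2 : Submodule ℝ (ℝ → ℝ)) (hP2V : P2 ≤ Submodule.span ℝ (Set.range B2))
    (hdual2 : ∀ f ∈ P2, ∀ i,
      (∫ x in Set.Icc (0 : ℝ) 1, f x * Dhat2 i x) = ∫ x in Set.Icc (0 : ℝ) 1, f x * D2 i x) :
    ∀ f1 ∈ P1, ∀ f2 ∈ P2,
      ∀ᵐ p ∂(volume.restrict (Set.Icc (0 : ℝ) 1 ×ˢ Set.Icc (0 : ℝ) 1)),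
        (∑ i1, ∑ i2,
          (∫ x in Set.Icc (0 : ℝ) 1, ∫ y in Set.Icc (0 : ℝ) 1,
            f1 x * f2 y * Dhat1 i1 x * Dhat2 i2 y) * B1 i1 p.1 * B2 i2 p.2)
          = f1 p.1 * f2 p.2 := by
  intro f1 hf1 f2 hf2
  -- coefficient expansions
  obtain ⟨c1, hc1⟩ := Submodule.mem_span_range_iff_exists_fun ℝ |>.mp (hP1V hf1)
  obtain ⟨c2, hc2⟩ := Submodule.mem_span_range_iff_exists_fun ℝ |>.mp (hP2V hf2)
  have hf1x : ∀ x, f1 x = ∑ j, c1 j * B1 j x := by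
    intro x
    rw [← hc1]; simp [Finset.sum_apply]
  have hf2x : ∀ x, f2 x = ∑ j, c2 j * B2 j x := by
    intro x
    rw [← hc2]; simp [Finset.sum_apply]
  -- 1D coefficients
  have key1 : ∀ i, (∫ x in Set.Icc (0:ℝ) 1, f1 x * Dhat1 i x) = c1 i := by
    intro i
    rw [hdual1 f1 hf1 i]
    have := one_dim_dual_coeff N1 B1 hB1cont hB1li G1 hG1 c1 i
    rw [← this]
    congr 1; ext x; rw [hf1x, hD1]
  have key2 : ∀ i, (∫ x in Set.Icc (0:ℝ) 1, f2 x * Dhat2 i x) = c2 i := by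
    intro i
    rw [hdual2 f2 hf2 i]
    have := one_dim_dual_coeff N2 B2 hB2cont hB2li G2 hG2 c2 i
    rw [← this]
    congr 1; ext x; rw [hf2x, hD2]
  -- factor the double integral
  have hfact : ∀ i1 i2, (∫ x in Set.Icc (0 : ℝ) 1, ∫ y in Set.Icc (0 : ℝ) 1,
      f1 x * f2 y * Dhat1 i1 x * Dhat2 i2 y) = c1 i1 * c2 i2 := by
    intro i1 i2
    have inner : ∀ x, (∫ y in Set.Icc (0 : ℝ) 1, f1 x * f2 y * Dhat1 i1 x * Dhat2 i2 y)
        = (f1 x * Dhat1 i1 x) * (c2 i2) := by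
      intro x
      rw [← key2 i2, ← integral_const_mul]
      congr 1; ext y; ring
    rw [show (fun x => ∫ y in Set.Icc (0 : ℝ) 1, f1 x * f2 y * Dhat1 i1 x * Dhat2 i2 y)
        = fun x => (f1 x * Dhat1 i1 x) * (c2 i2) from funext inner]
    rw [integral_mul_const, key1 i1]
  apply Filter.Eventually.of_forall
  intro p
  rw [Finset.sum_congr rfl fun i1 _ => Finset.sum_congr rfl fun i2 _ => by rw [hfact i1 i2]]
  rw [hf1x, hf2x, Finset.sum_mul]
  refine Finset.sum_congr rfl fun i1 _ => ?_
  rw [Finset.mul_sum]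
  exact Finset.sum_congr rfl fun i2 _ => by ring
end
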